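/- Let w ∈ S_n with w ≠ w_0 and first ascent r. The map sending a single-valued Rothe tableau T ∈ SRT(w·s_r, f_0) to the tableau obtained by deleting square (r, w_r) with its entry and moving every square of row r strictly right of column w_r, together with its entry, down to row r+1, produces a valid single-valued Rothe tableau in SRT(w, f_0). -/

import Mathlib

open Finset

/-- The Rothe diagram of `w` (0-based): squares `(i,j)` with `w i > j` and `w⁻¹ j > i`. -/
def RD {n : ℕ} (w : Equiv.Perm (Fin n)) : Finset (Fin n × Fin n) :=
  Finset.univ.filter (fun p => p.2 < w p.1 ∧ p.1 < w⁻¹ p.2)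

/-- `m_{ij}(w)`: the number of squares of `D(w)` in row `i` weakly left of column `j`. -/
def mStat {n : ℕ} (w : Equiv.Perm (Fin n)) (i j : Fin n) : ℕ :=
  ((RD w).filter (fun p => p.1 = i ∧ p.2 ≤ j)).card

/-- A single-valued Rothe tableau of shape `D(w)` flagged by `(1,…,n)`:
rows weakly decreasing, columns strictly increasing, and each (positive)
entry in 0-based row `i` is at most `i+1`. -/
def IsSRTf {n : ℕ} (w : Equiv.Perm (Fin n)) (L : Fin n × Fin n → ℕ) : Prop :=
  (∀ i j j' : Fin n, j < j' → (i, j) ∈ RD w → (i, j') ∈ RD w → L (i, j') ≤ L (i, j)) ∧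
  (∀ i i' j : Fin n, i < i' → (i, j) ∈ RD w → (i', j) ∈ RD w → L (i, j) < L (i', j)) ∧
  (∀ p ∈ RD w, 1 ≤ L p ∧ L p ≤ (p.1 : ℕ) + 1)

/-- Let `w ≠ w₀` have first ascent at 0-based position `a` (1-based `r = a+1`).
Deleting the square `(r, w_r)` of a tableau `T ∈ SRT(w·s_r, f₀)` and moving
every square of row `r` strictly right of column `w_r`, with its entry, down
to row `r+1`, yields a tableau in `SRT(w, f₀)`.  (The resulting filling assigns
to a square `(i,j)` of `D(w)` the entry `T(r,j)` if `i = r+1` and `j > w_r`,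
and `T(i,j)` otherwise.) -/
theorem stmt19 {n : ℕ} (w : Equiv.Perm (Fin n))
    (hw0 : w ≠ Fin.revPerm)
    (a : ℕ) (ha : a + 1 < n)
    (hasc : w ⟨a, by omega⟩ < w ⟨a + 1, ha⟩)
    (hmin : ∀ s : ℕ, ∀ hs : s < a, w ⟨s + 1, by omega⟩ < w ⟨s, by omega⟩)
    (w' : Equiv.Perm (Fin n))
    (hw' : w' = w * Equiv.swap (⟨a, by omega⟩ : Fin n) ⟨a + 1, ha⟩)
    (T : Fin n × Fin n → ℕ) (hT : IsSRTf w' T) :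
    IsSRTf w (fun p =>
      if (p.1 : ℕ) = a + 1 ∧ w ⟨a, by omega⟩ < p.2 then T ((⟨a, by omega⟩ : Fin n), p.2)
      else T p) := by
  obtain ⟨hTrow, hTcol, hTflag⟩ := hT
  have han : a < n := by omega
  have hAA1 : (⟨a, han⟩ : Fin n) < ⟨a + 1, ha⟩ := by simp [Fin.lt_def]
  show IsSRTf w (fun p =>
      if (p.1 : ℕ) = a + 1 ∧ w ⟨a, han⟩ < p.2 then T ((⟨a, han⟩ : Fin n), p.2)
      else T p)
  set A : Fin n := ⟨a, han⟩ with hAdef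
  set A1 : Fin n := ⟨a + 1, ha⟩ with hA1def
  have hbc : w A < w A1 := hasc
  have hmem : ∀ (u : Equiv.Perm (Fin n)) (i j : Fin n),
      ((i, j) ∈ RD u) ↔ (j < u i ∧ i < u⁻¹ j) := by
    intro u i j
    simp [RD]
  have hwv : ∀ i, w' i = w (Equiv.swap A A1 i) := by
    intro i; rw [hw']; rfl
  have hwinv : ∀ j, w'⁻¹ j = Equiv.swap A A1 (w⁻¹ j) := by
    intro j; rw [hw', mul_inv_rev, Equiv.swap_inv]; rfl
  have hswapA : Equiv.swap A A1 A = A1 := Equiv.swap_apply_left A A1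
  have hswapA1 : Equiv.swap A A1 A1 = A := Equiv.swap_apply_right A A1
  have hswapo : ∀ x : Fin n, (x : ℕ) ≠ a → (x : ℕ) ≠ a + 1 → Equiv.swap A A1 x = x := by
    intro x h1 h2
    apply Equiv.swap_apply_of_ne_of_ne
    · intro h; exact h1 (by rw [h])
    · intro h; exact h2 (by rw [h])
  have hinvne : ∀ j : Fin n, j ≠ w A → w⁻¹ j ≠ A := by
    intro j hj h
    exact hj (by rw [← h, Equiv.Perm.inv_def, Equiv.apply_symm_apply])
  have hinvne1 : ∀ j : Fin n, j ≠ w A1 → w⁻¹ j ≠ A1 := by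
    intro j hj h
    exact hj (by rw [← h, Equiv.Perm.inv_def, Equiv.apply_symm_apply])
  -- the key square (A, w A) ∈ RD w'
  have hAb : ((A, w A) : Fin n × Fin n) ∈ RD w' := by
    rw [hmem, hwv, hwinv, hswapA, Equiv.Perm.inv_def, Equiv.symm_apply_apply, hswapA]
    exact ⟨hbc, hAA1⟩
  -- mapping squares of RD w into RD w'
  have hmap : ∀ i j : Fin n, (i, j) ∈ RD w →
      ((if (i : ℕ) = a + 1 ∧ w A < j then ((A, j) : Fin n × Fin n) else (i, j)) ∈ RD w') := by
    intro i j hij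
    rw [hmem] at hij
    obtain ⟨h1, h2⟩ := hij
    by_cases hc : (i : ℕ) = a + 1 ∧ w A < j
    · rw [if_pos hc]
      rw [hmem, hwv, hwinv, hswapA]
      have hiA1 : i = A1 := Fin.ext hc.1
      have hx : a + 1 < ((w⁻¹ j : Fin n) : ℕ) := by
        rw [hiA1, Fin.lt_def] at h2; exact h2
      rw [hswapo (w⁻¹ j) (by omega) (by omega)]
      refine ⟨by rw [← hiA1]; exact h1, ?_⟩
      rw [Fin.lt_def]; exact Nat.lt_of_succ_lt hx
    · rw [if_neg hc]
      rw [hmem, hwv, hwinv]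
      by_cases hia : (i : ℕ) = a
      · have hiA : i = A := Fin.ext hia
        rw [hiA, hswapA]
        have hjb : j < w A := by rw [← hiA]; exact h1
        have hne1 : w⁻¹ j ≠ A := hinvne j (ne_of_lt hjb)
        have hne2 : w⁻¹ j ≠ A1 := hinvne1 j (ne_of_lt (lt_trans hjb hbc))
        rw [hswapo (w⁻¹ j) (fun h => hne1 (Fin.ext h)) (fun h => hne2 (Fin.ext h))]
        exact ⟨lt_trans hjb hbc, by rw [← hiA]; exact h2⟩
      · by_cases hia1 : (i : ℕ) = a + 1
        · have hiA1 : i = A1 := Fin.ext hia1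
          have hjble : ¬ w A < j := fun h => hc ⟨hia1, h⟩
          have hjne : j ≠ w A := by
            intro h
            rw [hiA1, h, Equiv.Perm.inv_def, Equiv.symm_apply_apply, Fin.lt_def] at h2
            exact lt_asymm h2 hAA1
          have hjb : j < w A := lt_of_le_of_ne (not_lt.mp hjble) hjne
          have hne1 : w⁻¹ j ≠ A := hinvne j hjne
          have hne2 : w⁻¹ j ≠ A1 := hinvne1 j (ne_of_lt (lt_trans hjb hbc))
          rw [hiA1, hswapA1,
            hswapo (w⁻¹ j) (fun h => hne1 (Fin.ext h)) (fun h => hne2 (Fin.ext h))]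
          exact ⟨hjb, by rw [← hiA1]; exact h2⟩
        · rw [hswapo i hia hia1]
          refine ⟨h1, ?_⟩
          by_cases hja : ((w⁻¹ j : Fin n) : ℕ) = a
          · have : w⁻¹ j = A := Fin.ext hja
            rw [this, hswapA]
            rw [this] at h2
            exact lt_trans h2 hAA1
          · by_cases hja1 : ((w⁻¹ j : Fin n) : ℕ) = a + 1
            · have hh : w⁻¹ j = A1 := Fin.ext hja1
              rw [hh, hswapA1]
              rw [hh, Fin.lt_def] at h2
              rw [Fin.lt_def]
              simp only [hA1def] at h2
              simp only [hAdef]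
              omega
            · rw [hswapo (w⁻¹ j) hja hja1]
              exact h2
  -- promotion from row a+1 to row a in RD w'
  have hstep : ∀ j : Fin n, ((A1, j) : Fin n × Fin n) ∈ RD w' → ((A, j) : Fin n × Fin n) ∈ RD w' := by
    intro j h
    rw [hmem] at h ⊢
    obtain ⟨h1, h2⟩ := h
    rw [hwv, hswapA1] at h1
    rw [hwv, hswapA]
    exact ⟨lt_trans h1 hbc, lt_trans hAA1 h2⟩
  refine ⟨?_, ?_, ?_⟩
  · -- rows weakly decreasing
    intro i j j' hjj' hj hj'
    dsimp only
    by_cases hi : (i : ℕ) = a + 1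
    · by_cases hbj : w A < j
      · have hbj' : w A < j' := lt_trans hbj hjj'
        rw [if_pos ⟨hi, hbj'⟩, if_pos ⟨hi, hbj⟩]
        have m1 := hmap i j hj; rw [if_pos ⟨hi, hbj⟩] at m1
        have m2 := hmap i j' hj'; rw [if_pos ⟨hi, hbj'⟩] at m2
        exact hTrow A j j' hjj' m1 m2
      · by_cases hbj' : w A < j'
        · rw [if_pos ⟨hi, hbj'⟩, if_neg (fun h => hbj h.2)]
          have m2 := hmap i j' hj'; rw [if_pos ⟨hi, hbj'⟩] at m2
          have m1 := hmap i j hj; rw [if_neg (fun h => hbj h.2)] at m1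
          have hiA1 : i = A1 := Fin.ext hi
          rw [hiA1] at m1
          have m1' := hstep j m1
          have hjb : j < w A := by
            have := ((hmem w' A1 j).mp m1).1
            rwa [hwv, hswapA1] at this
          calc T (A, j') ≤ T (A, w A) := hTrow A (w A) j' hbj' hAb m2
            _ ≤ T (A, j) := hTrow A j (w A) hjb m1' hAb
            _ ≤ T (i, j) := by rw [hiA1]; exact le_of_lt (hTcol A A1 j hAA1 m1' m1)
        · have c1 : ¬ ((i : ℕ) = a + 1 ∧ w A < j) := fun h => hbj h.2
          have c2 : ¬ ((i : ℕ) = a + 1 ∧ w A < j') := fun h => hbj' h.2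
          rw [if_neg c2, if_neg c1]
          have m1 := hmap i j hj; rw [if_neg (fun h => hbj h.2)] at m1
          have m2 := hmap i j' hj'; rw [if_neg (fun h => hbj' h.2)] at m2
          exact hTrow i j j' hjj' m1 m2
    · rw [if_neg (fun h => hi h.1), if_neg (fun h => hi h.1)]
      have m1 := hmap i j hj; rw [if_neg (fun h => hi h.1)] at m1
      have m2 := hmap i j' hj'; rw [if_neg (fun h => hi h.1)] at m2
      exact hTrow i j j' hjj' m1 m2
  · -- columns strictly increasing
    intro i i' j hii' hj hj'
    dsimp only
    have hlt : (i : ℕ) < (i' : ℕ) := hii'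
    by_cases hc : (i : ℕ) = a + 1 ∧ w A < j
    · rw [if_pos hc]
      have hne' : ¬ ((i' : ℕ) = a + 1 ∧ w A < j) := fun h => by omega
      rw [if_neg hne']
      have m1 := hmap i j hj; rw [if_pos hc] at m1
      have m2 := hmap i' j hj'; rw [if_neg hne'] at m2
      have : A < i' := by rw [Fin.lt_def]; simp only [hAdef]; omega
      exact hTcol A i' j this m1 m2
    · rw [if_neg hc]
      by_cases hc' : (i' : ℕ) = a + 1 ∧ w A < j
      · rw [if_pos hc']
        have m1 := hmap i j hj; rw [if_neg hc] at m1
        have m2 := hmap i' j hj'; rw [if_pos hc'] at m2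
        have hine : (i : ℕ) ≠ a := by
          intro h
          have hiA : i = A := Fin.ext h
          rw [hmem] at hj
          rw [hiA] at hj
          exact absurd hc'.2 (not_lt.mpr (le_of_lt hj.1))
        have : i < A := by
          rw [Fin.lt_def]; simp only [hAdef]; omega
        exact hTcol i A j this m1 m2
      · rw [if_neg hc']
        have m1 := hmap i j hj; rw [if_neg hc] at m1
        have m2 := hmap i' j hj'; rw [if_neg hc'] at m2
        exact hTcol i i' j hii' m1 m2
  · -- flag condition
    intro p hp
    dsimp only
    have m := hmap p.1 p.2 hp
    by_cases hc : ((p.1 : ℕ) = a + 1 ∧ w A < p.2)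
    · rw [if_pos hc] at m ⊢
      have h := hTflag (A, p.2) m
      refine ⟨h.1, le_trans h.2 ?_⟩
      simp only [hAdef]
      omega
    · rw [if_neg hc] at m ⊢
      exact hTflag p m
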